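/- (Corollary 2.6, symmetric identity for ordinary Genocchi polynomials) Let a and b be odd positive integers, let x be a real number, and let m be a positive integer. Then ∑_{i=0}^{m} C(m,i) · a^{i-1} · b^{m-i} · G_i(bx) · S_{m-i}(a) = ∑_{i=0}^{m} C(m,i) · b^{i-1} · a^{m-i} · G_i(ax) · S_{m-i}(b), where C(m,i) denotes the binomial coefficient. (In the terms i = 0 the Genocchi factor vanishes since G_0(x) = 0, so the rational factors a^{-1}, b^{-1} are harmless.) -/

import Mathlib

/-- The ordinary Genocchi polynomial, `G_n(x) = 2^n (B_n((x+1)/2) - B_n(x/2))`,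
equivalent to the generating function `2t·e^{xt}/(e^t+1) = ∑ G_n(x) tⁿ/n!`. -/
noncomputable def genocchiPoly (n : ℕ) (x : ℝ) : ℝ :=
  2 ^ n * (Polynomial.aeval ((x + 1) / 2) (Polynomial.bernoulli n) -
    Polynomial.aeval (x / 2) (Polynomial.bernoulli n))

/-- The alternating power sum `S_m(a) = ∑_{j=0}^{a-1} (-1)^j j^m` (with `0^0 = 1`). -/
noncomputable def altPowSum (m a : ℕ) : ℝ :=
  ∑ j ∈ Finset.range a, (-1 : ℝ) ^ j * (j : ℝ) ^ m

/-!
The left side is `m! / (ab)` times the `m`-th coefficient of `b · G_{bx}(at) · A_a(bt)`, where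
`G_y(t) = ∑ G_n(y) tⁿ/n!` and `A_a(t) = ∑ S_k(a) tᵏ/k!`. Since `G_y(t)(e^t + 1) = 2t e^{yt}` and,
for odd `a`, the telescoping geometric sum `A_a(t) = ∑_{j<a} (-e^t)^j` gives
`A_a(t)(e^t + 1) = e^{at} + 1`, multiplying by `(e^{at} + 1)(e^{bt} + 1)` turns this series into
`2ab t e^{abxt}(e^{abt} + 1)`, which is symmetric in `a` and `b`.
-/

open PowerSeries Finset Nat

noncomputable def bernoulliEGF (t : ℝ) : ℝ⟦X⟧ :=
  mk fun n => Polynomial.aeval t ((1 / n ! : ℚ) • Polynomial.bernoulli n)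

noncomputable def genocchiEGF (y : ℝ) : ℝ⟦X⟧ := mk fun n => genocchiPoly n y / n !

noncomputable def altPowSumEGF (a : ℕ) : ℝ⟦X⟧ := mk fun k => altPowSum k a / k !

lemma exp_sub_one_ne_zero : exp ℝ - 1 ≠ 0 := fun h => by
  simpa [coeff_exp] using congrArg (coeff 1) h

lemma rescale_exp_add_one_ne_zero (c : ℝ) : rescale c (exp ℝ) + 1 ≠ 0 := fun h => by
  have h0 := congrArg (coeff 0) h
  rw [map_add, coeff_rescale, coeff_exp, coeff_zero_eq_constantCoeff_apply, map_one] at h0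
  norm_num at h0

lemma rescale_two_exp : rescale (2 : ℝ) (exp ℝ) = exp ℝ * exp ℝ := by
  rw [← sq, exp_pow_eq_rescale_exp, Nat.cast_ofNat]

lemma genocchiEGF_eq (y : ℝ) :
    genocchiEGF y = rescale 2 (bernoulliEGF ((y + 1) / 2) - bernoulliEGF (y / 2)) := by
  ext n
  simp only [genocchiEGF, bernoulliEGF, genocchiPoly, map_sub, coeff_rescale, coeff_mk,
    map_smul, Rat.smul_def, Rat.cast_div, Rat.cast_one, Rat.cast_natCast]
  ring

lemma genocchiEGF_mul_exp_add_one (y : ℝ) :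
    genocchiEGF y * (exp ℝ + 1) = 2 * X * rescale y (exp ℝ) := by
  have hB (t : ℝ) : rescale 2 (bernoulliEGF t) * (exp ℝ * exp ℝ - 1) =
      2 * X * rescale (t * 2) (exp ℝ) := by
    have := congrArg (rescale (2 : ℝ)) (Polynomial.bernoulli_generating_function t)
    rwa [map_mul, map_sub, map_one, rescale_two_exp, map_mul, rescale_X, rescale_rescale,
      map_ofNat] at this
  have hshift : rescale (y + 1) (exp ℝ) = rescale y (exp ℝ) * exp ℝ := by
    rw [← exp_mul_exp_eq_exp_add, rescale_one, RingHom.id_apply]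
  refine mul_right_cancel₀ exp_sub_one_ne_zero ?_
  calc genocchiEGF y * (exp ℝ + 1) * (exp ℝ - 1)
      = rescale 2 (bernoulliEGF ((y + 1) / 2)) * (exp ℝ * exp ℝ - 1)
        - rescale 2 (bernoulliEGF (y / 2)) * (exp ℝ * exp ℝ - 1) := by
        rw [genocchiEGF_eq, map_sub]; ring
    _ = 2 * X * rescale y (exp ℝ) * (exp ℝ - 1) := by
        rw [hB, hB, div_mul_cancel₀ _ two_ne_zero, div_mul_cancel₀ _ two_ne_zero, hshift]; ring

lemma altPowSumEGF_eq_geom_sum (a : ℕ) : altPowSumEGF a = ∑ j ∈ range a, (-exp ℝ) ^ j := by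
  ext k
  simp only [altPowSumEGF, altPowSum, coeff_mk, map_sum, sum_div]
  refine sum_congr rfl fun j _ => ?_
  have hsign : (-1 : ℝ⟦X⟧) ^ j = C ((-1 : ℝ) ^ j) := by simp
  rw [neg_pow (exp ℝ), hsign, exp_pow_eq_rescale_exp, coeff_C_mul, coeff_rescale, coeff_exp]
  simp [div_eq_mul_inv, mul_assoc]

lemma altPowSumEGF_mul_exp_add_one {a : ℕ} (ha : Odd a) :
    altPowSumEGF a * (exp ℝ + 1) = rescale (a : ℝ) (exp ℝ) + 1 := by
  have := geom_sum_mul_neg (-exp ℝ) a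
  rw [ha.neg_pow, exp_pow_eq_rescale_exp, sub_neg_eq_add, sub_neg_eq_add] at this
  rw [altPowSumEGF_eq_geom_sum, add_comm (exp ℝ), this, add_comm]

noncomputable def symmetricEGF (a b : ℕ) (y : ℝ) : ℝ⟦X⟧ :=
  C (b : ℝ) * (rescale (a : ℝ) (genocchiEGF (b * y)) * rescale (b : ℝ) (altPowSumEGF a))

lemma symmetricEGF_mul {a : ℕ} (ha : Odd a) (b : ℕ) (y : ℝ) :
    symmetricEGF a b y * ((rescale (a : ℝ) (exp ℝ) + 1) * (rescale (b : ℝ) (exp ℝ) + 1)) =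
      2 * C ((a : ℝ) * b) * X * rescale ((a : ℝ) * b * y) (exp ℝ) *
        (rescale ((a : ℝ) * b) (exp ℝ) + 1) := by
  have hG := congrArg (rescale (a : ℝ)) (genocchiEGF_mul_exp_add_one (b * y))
  have hA := congrArg (rescale (b : ℝ)) (altPowSumEGF_mul_exp_add_one ha)
  simp only [map_mul, map_add, map_one, map_ofNat, rescale_X, rescale_rescale] at hG hA
  calc symmetricEGF a b y * ((rescale (a : ℝ) (exp ℝ) + 1) * (rescale (b : ℝ) (exp ℝ) + 1))
      = C (b : ℝ) * (rescale (a : ℝ) (genocchiEGF (b * y)) * (rescale (a : ℝ) (exp ℝ) + 1)) *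
          (rescale (b : ℝ) (altPowSumEGF a) * (rescale (b : ℝ) (exp ℝ) + 1)) := by
        rw [symmetricEGF]; ring
    _ = _ := by
        rw [hG, hA, map_mul, show (b : ℝ) * y * a = a * b * y by ring]; ring

lemma symmetricEGF_comm {a b : ℕ} (ha : Odd a) (hb : Odd b) (y : ℝ) :
    symmetricEGF a b y = symmetricEGF b a y := by
  refine mul_right_cancel₀ (mul_ne_zero (rescale_exp_add_one_ne_zero a)
    (rescale_exp_add_one_ne_zero b)) ?_
  rw [symmetricEGF_mul ha, mul_comm (rescale (a : ℝ) (exp ℝ) + 1), symmetricEGF_mul hb,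
    mul_comm (b : ℝ)]

lemma sum_eq_coeff_symmetricEGF {a b : ℕ} (ha : (a : ℝ) ≠ 0) (hb : (b : ℝ) ≠ 0) (y : ℝ)
    (m : ℕ) :
    ∑ i ∈ range (m + 1), (m.choose i : ℝ) * (a : ℝ) ^ ((i : ℤ) - 1) *
        (b : ℝ) ^ (m - i) * genocchiPoly i (b * y) * altPowSum (m - i) a =
      m ! / (a * b) * coeff m (symmetricEGF a b y) := by
  rw [symmetricEGF, coeff_C_mul, coeff_mul, Nat.sum_antidiagonal_eq_sum_range_succ_mk,
    mul_sum, mul_sum]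
  refine sum_congr rfl fun i hi => ?_
  simp only [coeff_rescale, genocchiEGF, altPowSumEGF, coeff_mk]
  rw [Nat.cast_choose ℝ (Nat.lt_succ_iff.mp (mem_range.mp hi)), zpow_sub₀ ha, zpow_natCast,
    zpow_one]
  field_simp

theorem stmt9_general (a b : ℕ) (hao : Odd a) (hbo : Odd b)
    (x : ℝ) (m : ℕ) :
    ∑ i ∈ Finset.range (m + 1), (m.choose i : ℝ) * (a : ℝ) ^ ((i : ℤ) - 1) *
        (b : ℝ) ^ (m - i) * genocchiPoly i ((b : ℝ) * x) * altPowSum (m - i) a =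
      ∑ i ∈ Finset.range (m + 1), (m.choose i : ℝ) * (b : ℝ) ^ ((i : ℤ) - 1) *
        (a : ℝ) ^ (m - i) * genocchiPoly i ((a : ℝ) * x) * altPowSum (m - i) b := by
  have ha0 : (a : ℝ) ≠ 0 := Nat.cast_ne_zero.mpr hao.pos.ne'
  have hb0 : (b : ℝ) ≠ 0 := Nat.cast_ne_zero.mpr hbo.pos.ne'
  rw [sum_eq_coeff_symmetricEGF ha0 hb0, sum_eq_coeff_symmetricEGF hb0 ha0,
    symmetricEGF_comm hao hbo, mul_comm (a : ℝ)]

theorem stmt9 (a b : ℕ) (ha : 0 < a) (hb : 0 < b) (hao : Odd a) (hbo : Odd b)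
    (x : ℝ) (m : ℕ) (hm : 0 < m) :
    ∑ i ∈ Finset.range (m + 1), (m.choose i : ℝ) * (a : ℝ) ^ ((i : ℤ) - 1) *
        (b : ℝ) ^ (m - i) * genocchiPoly i ((b : ℝ) * x) * altPowSum (m - i) a =
      ∑ i ∈ Finset.range (m + 1), (m.choose i : ℝ) * (b : ℝ) ^ ((i : ℤ) - 1) *
        (a : ℝ) ^ (m - i) * genocchiPoly i ((a : ℝ) * x) * altPowSum (m - i) b :=
  stmt9_general a b hao hbo x m
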